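/- The universal conditional probability converges to the true conditional probability in mean square: lim_{t→∞} ∑_{x_{1:t} ∈ {0,1}^t} μ(x_{<t}) (μ(x_t|x_{<t}) − ξ(x_t|x_{<t}))² = 0, where terms with μ(x_{<t}) = 0 are taken to be 0. -/

import Mathlib

/-!
The chain rule makes the expected instantaneous relative entropies `∑_{t<n} E_μ h_t`
telescope to the relative entropy of `μ` from `ξ` on strings of length `n`, which is at most
`ln (1 / w_μ)` because `ξ ≥ w_μ μ`. A binary Pinsker-type bound
`(p - q)² ≤ 4 (√p - √q)² ≤ 4 (p ln (p / q) - p + q)` bounds the mean-square error at time `t`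
by `4 E_μ h_t`, so these errors have bounded partial sums and tend to `0`.
-/

open Finset Filter

/-- A probability distribution on finite binary strings:
nonnegative, `1` on the empty string, and additive under one-symbol extension. -/
def IsDistr (ρ : List Bool → ℝ) : Prop :=
  (∀ x, 0 ≤ ρ x) ∧ ρ [] = 1 ∧
    ∀ x, ρ x = ρ (x ++ [false]) + ρ (x ++ [true])

/-- Conditional probability `ρ(b | x) = ρ(xb)/ρ(x)` (junk `0` when `ρ x = 0`). -/
noncomputable def condP (ρ : List Bool → ℝ) (x : List Bool) (b : Bool) : ℝ :=
  ρ (x ++ [b]) / ρ x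

/-- Instantaneous relative entropy
`h_t(x) = ∑_b μ(b|x) ln (μ(b|x)/ξ(b|x))` (conventions `0·ln 0 = 0` are automatic
since `Real.log 0 = 0` and `r/0 = 0`). -/
noncomputable def instEnt (μ ξ : List Bool → ℝ) (x : List Bool) : ℝ :=
  ∑ b : Bool, condP μ x b * Real.log (condP μ x b / condP ξ x b)

/-- Total relative entropy `H_n = ∑_{t=1}^n ∑_{x_{<t}} μ(x_{<t}) h_t(x_{<t})`
(histories of length `t-1`, i.e. length `t ∈ {0,…,n-1}`). -/
noncomputable def totalEnt (μ ξ : List Bool → ℝ) (n : ℕ) : ℝ :=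
  ∑ t ∈ Finset.range n, ∑ x : Fin t → Bool,
    μ (List.ofFn x) * instEnt μ ξ (List.ofFn x)

/-- `ρ`-expected loss of predicting `y` after history `x`. -/
noncomputable def expLoss (ρ : List Bool → ℝ) (l : Bool → Bool → ℝ)
    (x : List Bool) (y : Bool) : ℝ :=
  ∑ b : Bool, condP ρ x b * l b y

/-- `Y` is a fixed choice of minimizers for the scheme `Λ_ρ`. -/
def IsPredictor (ρ : List Bool → ℝ) (l : Bool → Bool → ℝ)
    (Y : List Bool → Bool) : Prop :=
  ∀ x y, expLoss ρ l x (Y x) ≤ expLoss ρ l x y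

/-- Total `μ`-expected loss `L_{nΛ}` of the scheme with minimizers `Y`. -/
noncomputable def totalLoss (μ : List Bool → ℝ) (l : Bool → Bool → ℝ)
    (Y : List Bool → Bool) (n : ℕ) : ℝ :=
  ∑ t ∈ Finset.range n, ∑ x : Fin t → Bool,
    μ (List.ofFn x) * expLoss μ l (List.ofFn x) (Y (List.ofFn x))

lemma sum_ofFn_succ {α M : Type*} [Fintype α] [AddCommMonoid M] (n : ℕ) (f : List α → M) :
    ∑ y : Fin (n + 1) → α, f (List.ofFn y) =
      ∑ x : Fin n → α, ∑ a : α, f (List.ofFn x ++ [a]) := by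
  rw [← (Fin.snocEquiv fun _ => α).sum_comp, Fintype.sum_prod_type, Finset.sum_comm]
  simp [Fin.snocEquiv, List.ofFn_succ', -List.ofFn_succ]

namespace IsDistr

variable {ρ : List Bool → ℝ}

lemma sum_append (hρ : IsDistr ρ) (x : List Bool) : ∑ b : Bool, ρ (x ++ [b]) = ρ x := by
  rw [Fintype.sum_bool, hρ.2.2 x, add_comm]

lemma append_le (hρ : IsDistr ρ) (x : List Bool) (b : Bool) : ρ (x ++ [b]) ≤ ρ x := by
  rw [← hρ.sum_append x]
  exact single_le_sum (f := fun b => ρ (x ++ [b])) (fun b _ => hρ.1 _) (mem_univ b)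

lemma sum_ofFn (hρ : IsDistr ρ) (n : ℕ) : ∑ x : Fin n → Bool, ρ (List.ofFn x) = 1 := by
  induction n with
  | zero => simp [hρ.2.1]
  | succ n ih => simp only [sum_ofFn_succ, hρ.sum_append, ih]

lemma condP_nonneg (hρ : IsDistr ρ) (x : List Bool) (b : Bool) : 0 ≤ condP ρ x b :=
  div_nonneg (hρ.1 _) (hρ.1 _)

lemma condP_le_one (hρ : IsDistr ρ) (x : List Bool) (b : Bool) : condP ρ x b ≤ 1 :=
  div_le_one_of_le₀ (hρ.append_le x b) (hρ.1 x)

lemma sum_condP (hρ : IsDistr ρ) {x : List Bool} (hx : ρ x ≠ 0) : ∑ b : Bool, condP ρ x b = 1 := by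
  simp only [condP, ← Finset.sum_div, hρ.sum_append, div_self hx]

end IsDistr

lemma isDistr_of_hasSum_mixture {ι : Type*} {μs : ι → List Bool → ℝ} {w : ι → ℝ}
    {ξ : List Bool → ℝ} (hμs : ∀ i, IsDistr (μs i)) (hw : ∀ i, 0 ≤ w i) (hw1 : HasSum w 1)
    (hξ : ∀ x, HasSum (fun i => w i * μs i x) (ξ x)) : IsDistr ξ := by
  refine ⟨fun x => (hξ x).nonneg fun i => mul_nonneg (hw i) ((hμs i).1 x), ?_, fun x => ?_⟩
  · exact (hξ []).unique (by simpa [(hμs _).2.1] using hw1)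
  · refine (hξ x).unique ?_
    convert (hξ (x ++ [false])).add (hξ (x ++ [true])) using 1
    funext i
    rw [(hμs i).2.2 x, mul_add]

lemma sq_sqrt_sub_sqrt_le_mul_log_div_sub_add {p q : ℝ} (hp : 0 ≤ p) (hq : 0 ≤ q)
    (hpq : 0 < p → 0 < q) : (√p - √q) ^ 2 ≤ p * Real.log (p / q) - p + q := by
  rcases hp.eq_or_lt with rfl | hp
  · simp [Real.sq_sqrt hq]
  obtain ⟨s, hs, rfl⟩ : ∃ s, 0 < s ∧ s ^ 2 = p := ⟨√p, Real.sqrt_pos.2 hp, Real.sq_sqrt hp.le⟩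
  obtain ⟨r, hr, rfl⟩ : ∃ r, 0 < r ∧ r ^ 2 = q := ⟨√q, Real.sqrt_pos.2 (hpq hp), Real.sq_sqrt hq⟩
  have hlog : 1 - r / s ≤ Real.log (s / r) := by
    simpa using Real.one_sub_inv_le_log_of_pos (div_pos hs hr)
  have hrs : s ^ 2 * (1 - r / s) = s ^ 2 - r * s := by field_simp
  rw [Real.sqrt_sq hs.le, Real.sqrt_sq hr.le, ← div_pow, Real.log_pow]
  nlinarith [mul_le_mul_of_nonneg_left hlog (sq_nonneg s)]

lemma sq_sub_le_four_mul_sq_sqrt_sub_sqrt {p q : ℝ} (hp : 0 ≤ p) (hq : 0 ≤ q) (hp1 : p ≤ 1)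
    (hq1 : q ≤ 1) : (p - q) ^ 2 ≤ 4 * (√p - √q) ^ 2 := by
  have hsum : √p + √q ≤ 2 := by
    linarith [Real.sqrt_le_one.mpr hp1, Real.sqrt_le_one.mpr hq1]
  calc (p - q) ^ 2 = (√p + √q) ^ 2 * (√p - √q) ^ 2 := by
        rw [← mul_pow]
        congr 1
        linear_combination Real.sq_sqrt hq - Real.sq_sqrt hp
    _ ≤ 2 ^ 2 * (√p - √q) ^ 2 := by gcongr
    _ = 4 * (√p - √q) ^ 2 := by norm_num

lemma mul_log_div_le_mul_neg_log {a b w : ℝ} (ha : 0 ≤ a) (hw : 0 < w) (h : w * a ≤ b) :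
    a * Real.log (a / b) ≤ a * -Real.log w := by
  rcases ha.eq_or_lt with rfl | ha
  · simp
  have hb : 0 < b := (mul_pos hw ha).trans_le h
  rw [← Real.log_inv]
  gcongr
  rw [div_le_iff₀ hb, inv_mul_eq_div, le_div_iff₀ hw]
  linarith

section Entropy

variable {μ ξ : List Bool → ℝ}

lemma sum_mul_sq_condP_sub_le (hμ : IsDistr μ) (hξ : IsDistr ξ)
    (hac : ∀ x, 0 < μ x → 0 < ξ x) (x : List Bool) :
    ∑ b : Bool, μ x * (condP μ x b - condP ξ x b) ^ 2 ≤ 4 * (μ x * instEnt μ ξ x) := by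
  rcases (hμ.1 x).eq_or_lt with hx | hx
  · simp [← hx]
  have hξx := hac x hx
  have hac' : ∀ b, 0 < condP μ x b → 0 < condP ξ x b := fun b hb =>
    div_pos (hac _ ((div_pos_iff_of_pos_right hx).1 hb)) hξx
  calc ∑ b : Bool, μ x * (condP μ x b - condP ξ x b) ^ 2
      ≤ ∑ b : Bool, μ x * (4 * (condP μ x b * Real.log (condP μ x b / condP ξ x b)
          - condP μ x b + condP ξ x b)) := by
        gcongr with b
        refine (sq_sub_le_four_mul_sq_sqrt_sub_sqrt (hμ.condP_nonneg x b) (hξ.condP_nonneg x b)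
          (hμ.condP_le_one x b) (hξ.condP_le_one x b)).trans ?_
        gcongr
        exact sq_sqrt_sub_sqrt_le_mul_log_div_sub_add (hμ.condP_nonneg x b)
          (hξ.condP_nonneg x b) (hac' b)
    _ = 4 * (μ x * instEnt μ ξ x) := by
        rw [← mul_sum, ← mul_sum, sum_add_distrib, sum_sub_distrib, hμ.sum_condP hx.ne',
          hξ.sum_condP hξx.ne', instEnt]
        ring

/-- The chain rule for relative entropy, at one history. -/
lemma mul_instEnt_eq_sub (hμ : IsDistr μ) (hac : ∀ x, 0 < μ x → 0 < ξ x) (x : List Bool) :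
    μ x * instEnt μ ξ x =
      ∑ b : Bool, μ (x ++ [b]) * Real.log (μ (x ++ [b]) / ξ (x ++ [b]))
        - μ x * Real.log (μ x / ξ x) := by
  rcases (hμ.1 x).eq_or_lt with hx | hx
  · have hb : ∀ b, μ (x ++ [b]) = 0 := fun b => le_antisymm (hx ▸ hμ.append_le x b) (hμ.1 _)
    simp [hb, ← hx]
  have hξx := hac x hx
  have hterm : ∀ b, μ x * (condP μ x b * Real.log (condP μ x b / condP ξ x b)) =
      μ (x ++ [b]) * Real.log (μ (x ++ [b]) / ξ (x ++ [b]))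
        - μ (x ++ [b]) * Real.log (μ x / ξ x) := by
    intro b
    rcases (hμ.1 (x ++ [b])).eq_or_lt with hb | hb
    · simp [condP, ← hb]
    have hξb := hac _ hb
    have hratio : condP μ x b / condP ξ x b = (μ (x ++ [b]) / ξ (x ++ [b])) / (μ x / ξ x) := by
      simp only [condP]
      field_simp
    rw [hratio, Real.log_div (by positivity) (by positivity), condP, ← mul_assoc,
      mul_div_cancel₀ _ hx.ne', mul_sub]
  rw [instEnt, mul_sum, sum_congr rfl fun b _ => hterm b, sum_sub_distrib, ← sum_mul,
    hμ.sum_append]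

lemma totalEnt_eq_sum_mul_log_div (hμ : IsDistr μ) (hξ : ξ [] = 1)
    (hac : ∀ x, 0 < μ x → 0 < ξ x) (n : ℕ) :
    totalEnt μ ξ n = ∑ x : Fin n → Bool,
      μ (List.ofFn x) * Real.log (μ (List.ofFn x) / ξ (List.ofFn x)) := by
  induction n with
  | zero => simp [totalEnt, hμ.2.1, hξ]
  | succ n ih =>
    rw [totalEnt] at ih ⊢
    rw [sum_range_succ, ih, sum_ofFn_succ n fun y => μ y * Real.log (μ y / ξ y)]
    simp only [mul_instEnt_eq_sub hμ hac, sum_sub_distrib]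
    ring

lemma totalEnt_le_neg_log (hμ : IsDistr μ) (hξ : ξ [] = 1) (hac : ∀ x, 0 < μ x → 0 < ξ x)
    {w : ℝ} (hw : 0 < w) (hle : ∀ x, w * μ x ≤ ξ x) (n : ℕ) :
    totalEnt μ ξ n ≤ -Real.log w := by
  rw [totalEnt_eq_sum_mul_log_div hμ hξ hac]
  calc _ ≤ ∑ x : Fin n → Bool, μ (List.ofFn x) * -Real.log w :=
        sum_le_sum fun x _ => mul_log_div_le_mul_neg_log (hμ.1 _) hw (hle _)
    _ = -Real.log w := by rw [← sum_mul, hμ.sum_ofFn, one_mul]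

lemma sum_range_sum_mul_sq_condP_sub_le (hμ : IsDistr μ) (hξ : IsDistr ξ)
    (hac : ∀ x, 0 < μ x → 0 < ξ x) (n : ℕ) :
    ∑ t ∈ range n, ∑ x : Fin t → Bool, ∑ b : Bool,
      μ (List.ofFn x) * (condP μ (List.ofFn x) b - condP ξ (List.ofFn x) b) ^ 2
      ≤ 4 * totalEnt μ ξ n := by
  rw [totalEnt, mul_sum]
  gcongr with t
  rw [mul_sum]
  gcongr with x
  exact sum_mul_sq_condP_sub_le hμ hξ hac _

end Entropy

theorem convergence_in_mean_square_general {ι : Type*}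
    (μs : ι → List Bool → ℝ) (w : ι → ℝ)
    (hμs : ∀ i, IsDistr (μs i)) (hw : ∀ i, 0 < w i) (hw1 : HasSum w 1)
    (ξ : List Bool → ℝ) (hξ : ∀ x, HasSum (fun i => w i * μs i x) (ξ x))
    (i₀ : ι) :
    Tendsto (fun t : ℕ => ∑ x : Fin t → Bool, ∑ b : Bool,
        μs i₀ (List.ofFn x) *
          (condP (μs i₀) (List.ofFn x) b - condP ξ (List.ofFn x) b) ^ 2)
      atTop (nhds 0) := by
  have hμ := hμs i₀
  have hξd : IsDistr ξ := isDistr_of_hasSum_mixture hμs (fun i => (hw i).le) hw1 hξ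
  have hle : ∀ x, w i₀ * μs i₀ x ≤ ξ x := fun x =>
    le_hasSum (hξ x) i₀ fun i _ => mul_nonneg (hw i).le ((hμs i).1 x)
  have hac : ∀ x, 0 < μs i₀ x → 0 < ξ x := fun x hx => (mul_pos (hw i₀) hx).trans_le (hle x)
  refine (summable_of_sum_range_le (c := 4 * -Real.log (w i₀)) (fun t => ?_) fun n => ?_)
    |>.tendsto_atTop_zero
  · exact sum_nonneg fun x _ => sum_nonneg fun b _ => mul_nonneg (hμ.1 _) (sq_nonneg _)
  · exact (sum_range_sum_mul_sq_condP_sub_le hμ hξd hac n).trans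
      (mul_le_mul_of_nonneg_left (totalEnt_le_neg_log hμ hξd.2.1 hac (hw i₀) hle n) four_pos.le)

/-- Theorem 1(ii), mean-square convergence: the `μ`-expected
squared difference of the conditional probabilities of `ξ` and `μ = μs i₀`
at time `t` tends to `0` as `t → ∞`. -/
theorem convergence_in_mean_square {ι : Type*} [Countable ι]
    (μs : ι → List Bool → ℝ) (w : ι → ℝ)
    (hμs : ∀ i, IsDistr (μs i)) (hw : ∀ i, 0 < w i) (hw1 : HasSum w 1)
    (ξ : List Bool → ℝ) (hξ : ∀ x, HasSum (fun i => w i * μs i x) (ξ x))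
    (i₀ : ι) :
    Tendsto (fun t : ℕ => ∑ x : Fin t → Bool, ∑ b : Bool,
        μs i₀ (List.ofFn x) *
          (condP (μs i₀) (List.ofFn x) b - condP ξ (List.ofFn x) b) ^ 2)
      atTop (nhds 0) :=
  convergence_in_mean_square_general μs w hμs hw hw1 ξ hξ i₀
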